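/- Let H be a bipartite graph with keywords U_H and n bidders V, let f: U_H → V map exactly k keywords to each bidder, fix u ∈ U_H with v = f(u), fix 1 ≤ t ≤ n, let σ be a permutation of V, and let σ' be obtained from σ by removing v and reinserting it at rank t. If v is not matched by Ranking(H, π, σ'), then u is matched by Ranking(H, π, σ) to a bidder whose rank in σ is at most t. -/

import Mathlib

/-!
Write `H - v` for `H` with the bidder `v = f u` deleted. As `v` is never matched under `σ'`,
Ranking on `H` under `σ'` makes exactly the same choices as Ranking on `H - v`, and Ranking on
`H - v` only sees the relative order of the bidders other than `v`, on which `σ` and `σ'` agree.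
At every time, Ranking on `H` under `σ` has matched at most `v` besides the bidders matched on
`H - v`. When `u` arrives under `σ'` the bidder `v` is still free, so `u` takes some `x ≠ v` with
`σ' x < σ' v = t`, hence `σ x ≤ t`; this `x` is also free when `u` arrives under `σ`, so there
`u` is matched to a bidder of rank at most `σ x ≤ t`.
-/

noncomputable def greedyMatchedUpTo (m : ℕ) {R : Type*} [Fintype R] [DecidableEq R]
    (A : Fin m → R → Prop) [∀ t v, Decidable (A t v)] (rk : R → ℕ) : ℕ → Finset R
  | 0 => ∅
  | t + 1 =>
    let M := greedyMatchedUpTo m A rk t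
    if h : t < m then
      let avail := Finset.univ.filter fun v => A ⟨t, h⟩ v ∧ v ∉ M
      if hne : avail.Nonempty then
        insert (Function.argminOn rk ↑avail (Finset.coe_nonempty.mpr hne)) M
      else M
    else M

noncomputable def greedyAssign (m : ℕ) {R : Type*} [Fintype R] [DecidableEq R]
    (A : Fin m → R → Prop) [∀ t v, Decidable (A t v)] (rk : R → ℕ) (u : Fin m) :
    Option R :=
  let M := greedyMatchedUpTo m A rk u.val
  let avail := Finset.univ.filter fun v => A u v ∧ v ∉ M
  if hne : avail.Nonempty then
    some (Function.argminOn rk ↑avail (Finset.coe_nonempty.mpr hne))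
  else none

section Choice

variable {V : Type*} {B : V → Prop} {rk rk' : V → ℕ} {M N : Finset V} {v x y : V}

/-- `x` is the bidder Ranking gives to an arriving keyword with neighbourhood `B` when the
bidders in `M` are already matched. -/
def IsRankingChoice (B : V → Prop) (rk : V → ℕ) (M : Finset V) (x : V) : Prop :=
  B x ∧ x ∉ M ∧ ∀ y, B y → y ∉ M → rk x ≤ rk y

theorem IsRankingChoice.eq (hinj : rk.Injective) (hx : IsRankingChoice B rk M x)
    (hy : IsRankingChoice B rk M y) : x = y :=
  hinj <| le_antisymm (hx.2.2 y hy.1 hy.2.1) (hy.2.2 x hx.1 hx.2.1)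

theorem exists_isRankingChoice [Finite V] (hy : B y) (hyM : y ∉ M) :
    ∃ x, IsRankingChoice B rk M x := by
  obtain ⟨x, ⟨hxB, hxM⟩, hmin⟩ :=
    (Set.toFinite {y | B y ∧ y ∉ M}).exists_minimalFor rk _ ⟨y, hy, hyM⟩
  refine ⟨x, hxB, hxM, fun z hzB hzM => ?_⟩
  by_contra! hlt
  exact hlt.not_ge (hmin ⟨hzB, hzM⟩ hlt.le)

theorem isRankingChoice_congr_rank
    (h : ∀ x y, B x → B y → (rk x ≤ rk y ↔ rk' x ≤ rk' y)) :
    IsRankingChoice B rk M x ↔ IsRankingChoice B rk' M x := by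
  refine and_congr_right fun hx => and_congr_right fun _ => forall_congr' fun y => ?_
  exact imp_congr_right fun hy => imp_congr_right fun _ => h x y hx hy

theorem IsRankingChoice.delete (hx : IsRankingChoice B rk M x) (hxv : x ≠ v) (hxN : x ∉ N)
    (hNM : ∀ y, y ≠ v → y ∉ N → y ∉ M) :
    IsRankingChoice (fun y => B y ∧ y ≠ v) rk N x :=
  ⟨⟨hx.1, hxv⟩, hxN, fun y hy hyN => hx.2.2 y hy.1 (hNM y hy.2 hyN)⟩

theorem isRankingChoice_delete_iff [Finite V] (hinj : rk.Injective)
    (hv : ¬ IsRankingChoice B rk M v) :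
    IsRankingChoice B rk M x ↔ IsRankingChoice (fun y => B y ∧ y ≠ v) rk M x := by
  have hdel {z} (hz : IsRankingChoice B rk M z) :
      IsRankingChoice (fun y => B y ∧ y ≠ v) rk M z :=
    hz.delete (by rintro rfl; exact hv hz) hz.2.1 fun _ _ => id
  refine ⟨hdel, fun hx => ⟨hx.1.1, hx.2.1, fun y hyB hyM => ?_⟩⟩
  -- the actual choice `z` is not `v`, so it is also the choice after deleting `v`, i.e. `z = x`
  obtain ⟨z, hz⟩ := exists_isRankingChoice (rk := rk) hyB hyM
  obtain rfl := hx.eq hinj (hdel hz)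
  exact hz.2.2 y hyB hyM

theorem isRankingChoice_argminOn [Fintype V] [DecidableEq V] [DecidablePred B]
    (h : ((Finset.univ.filter fun w => B w ∧ w ∉ M : Finset V) : Set V).Nonempty) :
    IsRankingChoice B rk M (Function.argminOn rk _ h) := by
  have hmem := Function.argminOn_mem rk _ h
  rw [Finset.mem_coe, Finset.mem_filter] at hmem
  refine ⟨hmem.2.1, hmem.2.2, fun y hyB hyM => Function.argminOn_le rk _ ?_⟩
  simpa using ⟨hyB, hyM⟩

end Choice

section Run

variable {m : ℕ} {V : Type*} [Fintype V] [DecidableEq V]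
  {A A' : Fin m → V → Prop} [∀ q w, Decidable (A q w)] [∀ q w, Decidable (A' q w)]
  {rk rk' : V → ℕ}

theorem greedyMatchedUpTo_subset_succ (s : ℕ) :
    greedyMatchedUpTo m A rk s ⊆ greedyMatchedUpTo m A rk (s + 1) := by
  rw [greedyMatchedUpTo]
  dsimp only
  split_ifs
  exacts [Finset.subset_insert _ _, subset_rfl, subset_rfl]

theorem greedyMatchedUpTo_mono : Monotone (greedyMatchedUpTo m A rk) :=
  monotone_nat_of_le_succ greedyMatchedUpTo_subset_succ

theorem greedyMatchedUpTo_succ_of_le {s : ℕ} (h : m ≤ s) :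
    greedyMatchedUpTo m A rk (s + 1) = greedyMatchedUpTo m A rk s := by
  rw [greedyMatchedUpTo, dif_neg h.not_gt]

theorem mem_greedyMatchedUpTo_succ (hinj : rk.Injective) (q : Fin m) {w : V} :
    w ∈ greedyMatchedUpTo m A rk (q + 1) ↔
      w ∈ greedyMatchedUpTo m A rk q ∨
        IsRankingChoice (A q) rk (greedyMatchedUpTo m A rk q) w := by
  rw [greedyMatchedUpTo, dif_pos q.isLt]
  dsimp only
  split_ifs with hne
  · have hmin := isRankingChoice_argminOn (B := A q) (rk := rk) (Finset.coe_nonempty.mpr hne)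
    rw [Finset.mem_insert, or_comm]
    exact or_congr_right ⟨fun hw => hw ▸ hmin, fun hw => hw.eq hinj hmin⟩
  · refine (or_iff_left fun hw => hne ⟨w, ?_⟩).symm
    simpa using ⟨hw.1, hw.2.1⟩

theorem greedyMatchedUpTo_eq_of_isRankingChoice_iff (hinj : rk.Injective)
    (hinj' : rk'.Injective)
    (h : ∀ q : Fin m, greedyMatchedUpTo m A rk q = greedyMatchedUpTo m A' rk' q → ∀ w,
      IsRankingChoice (A q) rk (greedyMatchedUpTo m A rk q) w ↔
        IsRankingChoice (A' q) rk' (greedyMatchedUpTo m A' rk' q) w) :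
    greedyMatchedUpTo m A rk = greedyMatchedUpTo m A' rk' := by
  funext s
  induction s with
  | zero => rfl
  | succ s ih =>
    obtain hs | hs := lt_or_ge s m
    · ext w
      rw [mem_greedyMatchedUpTo_succ hinj ⟨s, hs⟩, mem_greedyMatchedUpTo_succ hinj' ⟨s, hs⟩,
        h ⟨s, hs⟩ ih]
      simp only [ih]
    · rw [greedyMatchedUpTo_succ_of_le hs, greedyMatchedUpTo_succ_of_le hs, ih]

theorem greedyMatchedUpTo_congr_rank (hinj : rk.Injective) (hinj' : rk'.Injective)
    (h : ∀ q x y, A q x → A q y → (rk x ≤ rk y ↔ rk' x ≤ rk' y)) :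
    greedyMatchedUpTo m A rk = greedyMatchedUpTo m A rk' :=
  greedyMatchedUpTo_eq_of_isRankingChoice_iff hinj hinj' fun q hq _ => by
    rw [← hq]; exact isRankingChoice_congr_rank (h q)

theorem greedyMatchedUpTo_eq_delete (hinj : rk.Injective) {v : V}
    (hv : v ∉ greedyMatchedUpTo m A rk m) :
    greedyMatchedUpTo m A rk = greedyMatchedUpTo m (fun q w => A q w ∧ w ≠ v) rk :=
  greedyMatchedUpTo_eq_of_isRankingChoice_iff hinj hinj fun q hq _ => by
    rw [← hq]
    refine isRankingChoice_delete_iff hinj fun hvq => hv ?_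
    exact greedyMatchedUpTo_mono q.isLt ((mem_greedyMatchedUpTo_succ hinj q).2 (.inr hvq))

theorem greedyMatchedUpTo_subset_insert_delete (hinj : rk.Injective) (v : V) (s : ℕ) :
    greedyMatchedUpTo m A rk s ⊆
      insert v (greedyMatchedUpTo m (fun q w => A q w ∧ w ≠ v) rk s) := by
  induction s with
  | zero => simp [greedyMatchedUpTo]
  | succ s ih =>
    obtain hs | hs := lt_or_ge s m
    · intro w hw
      rw [mem_greedyMatchedUpTo_succ hinj ⟨s, hs⟩] at hw
      rw [Finset.mem_insert, mem_greedyMatchedUpTo_succ hinj ⟨s, hs⟩]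
      rcases hw with hw | hw
      · exact (Finset.mem_insert.1 (ih hw)).imp_right .inl
      by_cases hwv : w = v
      · exact .inl hwv
      by_cases hwN : w ∈ greedyMatchedUpTo m (fun q w => A q w ∧ w ≠ v) rk s
      · exact .inr (.inl hwN)
      exact .inr <| .inr <| hw.delete hwv hwN fun y hyv hyN hyM =>
        (Finset.mem_insert.1 (ih hyM)).elim hyv hyN
    · rw [greedyMatchedUpTo_succ_of_le hs, greedyMatchedUpTo_succ_of_le hs]
      exact ih

theorem greedyAssign_exists_le {u : Fin m} {x : V} (hx : A u x)
    (hxM : x ∉ greedyMatchedUpTo m A rk u) :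
    ∃ y, greedyAssign m A rk u = some y ∧ rk y ≤ rk x := by
  have hx' : x ∈ Finset.univ.filter fun w => A u w ∧ w ∉ greedyMatchedUpTo m A rk u := by
    simp [hx, hxM]
  rw [greedyAssign, dif_pos ⟨x, hx'⟩]
  exact ⟨_, rfl, Function.argminOn_le rk _ hx'⟩

end Run

theorem Equiv.card_filter_apply_lt {V : Type*} [Fintype V] {n : ℕ} (e : V ≃ Fin n) (w : V) :
    (Finset.univ.filter fun w' => e w' < e w).card = e w := by
  rw [← Fin.card_Iio, Finset.card_equiv e]
  simp

theorem Equiv.val_apply_le_succ_of_lt_iff_lt {V : Type*} [Fintype V] [DecidableEq V] {n : ℕ}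
    (σ σ' : V ≃ Fin n) {v w : V}
    (h : ∀ x y, x ≠ v → y ≠ v → (σ x < σ y ↔ σ' x < σ' y)) (hw : w ≠ v) :
    (σ w : ℕ) ≤ σ' w + 1 := by
  have hsub : (Finset.univ.filter fun x => σ x < σ w) ⊆
      insert v (Finset.univ.filter fun x => σ' x < σ' w) := by
    intro x hx
    rw [Finset.mem_insert, Finset.mem_filter]
    by_cases hxv : x = v
    · exact .inl hxv
    · exact .inr ⟨Finset.mem_univ x, (h x w hxv hw).1 (Finset.mem_filter.1 hx).2⟩
  calc (σ w : ℕ) = (Finset.univ.filter fun x => σ x < σ w).card :=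
        (σ.card_filter_apply_lt w).symm
    _ ≤ (insert v (Finset.univ.filter fun x => σ' x < σ' w)).card := Finset.card_le_card hsub
    _ ≤ (Finset.univ.filter fun x => σ' x < σ' w).card + 1 := Finset.card_insert_le _ _
    _ = σ' w + 1 := by rw [σ'.card_filter_apply_lt]

theorem stmt11_general (m nV : ℕ) {V : Type*} [Fintype V] [DecidableEq V]
    (A : Fin m → V → Prop) [∀ t v, Decidable (A t v)]
    (f : Fin m → V)
    (hadj : ∀ u, A u (f u))
    (u : Fin m) (t : Fin nV)
    (σ σ' : V ≃ Fin nV)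
    (hσ'v : σ' (f u) = t)
    (hσ' : ∀ w w' : V, w ≠ f u → w' ≠ f u → (σ w < σ w' ↔ σ' w < σ' w'))
    (hunmatched : f u ∉ greedyMatchedUpTo m A (fun v => (σ' v : ℕ)) m) :
    ∃ v' : V, greedyAssign m A (fun v => (σ v : ℕ)) u = some v' ∧ (σ v' : ℕ) ≤ (t : ℕ) := by
  have hinj : Function.Injective fun v => (σ v : ℕ) := Fin.val_injective.comp σ.injective
  have hinj' : Function.Injective fun v => (σ' v : ℕ) := Fin.val_injective.comp σ'.injective
  have hrun : greedyMatchedUpTo m A (fun v => (σ' v : ℕ)) =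
      greedyMatchedUpTo m (fun q w => A q w ∧ w ≠ f u) (fun v => (σ v : ℕ)) := by
    rw [greedyMatchedUpTo_eq_delete hinj' hunmatched]
    refine greedyMatchedUpTo_congr_rank hinj' hinj fun _ x y hx hy => ?_
    simp only [← not_lt, Fin.val_fin_lt, hσ' y x hy.2 hx.2]
  have hfu : f u ∉ greedyMatchedUpTo m A (fun v => (σ' v : ℕ)) u :=
    fun h => hunmatched (greedyMatchedUpTo_mono u.isLt.le h)
  obtain ⟨x, hx⟩ := exists_isRankingChoice (rk := fun v => (σ' v : ℕ)) (hadj u) hfu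
  have hxv : x ≠ f u := by
    rintro rfl
    exact hunmatched (greedyMatchedUpTo_mono u.isLt
      ((mem_greedyMatchedUpTo_succ hinj' u).2 (.inr hx)))
  have hσ'x : (σ' x : ℕ) < t :=
    ((hx.2.2 _ (hadj u) hfu).trans_eq (congrArg Fin.val hσ'v)).lt_of_ne
      fun h => hxv (hinj' (h.trans (congrArg Fin.val hσ'v).symm))
  have hxM : x ∉ greedyMatchedUpTo m A (fun v => (σ v : ℕ)) u := fun h =>
    (Finset.mem_insert.1 (greedyMatchedUpTo_subset_insert_delete hinj (f u) u h)).elim hxv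
      (hrun ▸ hx.2.1)
  obtain ⟨y, hy, hyx⟩ := greedyAssign_exists_le hx.1 hxM
  have hσx := σ.val_apply_le_succ_of_lt_iff_lt σ' hσ' hxv
  exact ⟨y, hy, by omega⟩

/-- Let `H` have keywords `Fin m` and `nV` bidders `V`, let
`f : Fin m → V` map exactly `k` keywords to each bidder (each adjacent to it), fix a
keyword `u` with `v = f u`, a target rank `t`, a ranking `σ`, and let `σ'` be obtained
from `σ` by removing `v` and reinserting it at rank `t` (i.e. `σ' v = t` and `σ'` agrees
with `σ` on the relative order of all other bidders).  If `v` is unmatched by Ranking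
under `σ'`, then Ranking under `σ` matches `u` to a bidder of rank at most `t`. -/
theorem stmt11 (m nV k : ℕ) {V : Type*} [Fintype V] [DecidableEq V]
    (hV : Fintype.card V = nV)
    (A : Fin m → V → Prop) [∀ t v, Decidable (A t v)]
    (f : Fin m → V)
    (hfib : ∀ v : V, (Finset.univ.filter fun u => f u = v).card = k)
    (hadj : ∀ u, A u (f u))
    (u : Fin m) (t : Fin nV)
    (σ σ' : V ≃ Fin nV)
    (hσ'v : σ' (f u) = t)
    (hσ' : ∀ w w' : V, w ≠ f u → w' ≠ f u → (σ w < σ w' ↔ σ' w < σ' w'))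
    (hunmatched : f u ∉ greedyMatchedUpTo m A (fun v => (σ' v : ℕ)) m) :
    ∃ v' : V, greedyAssign m A (fun v => (σ v : ℕ)) u = some v' ∧ (σ v' : ℕ) ≤ (t : ℕ) :=
  stmt11_general m nV A f hadj u t σ σ' hσ'v hσ' hunmatched
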